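/- For any box u in the column diagram of μ, the leg and arm lengths are preserved by the cyclic shift: l(π(u)) = l(u) and a(π(u)) = a(u), where l and a on the left are computed in the diagram of π(μ). -/

import Mathlib

open Finset

noncomputable section
attribute [local instance] Classical.propDecidable

/-- `u` lies in the column diagram of the composition `μ` (columns `1,…,n`). -/
def dgIn (n : ℕ) (μ : ℕ → ℕ) (u : ℕ × ℕ) : Prop :=
  1 ≤ u.1 ∧ u.1 ≤ n ∧ 1 ≤ u.2 ∧ u.2 ≤ μ u.1

/-- `u` lies in the augmented diagram of `μ` (row `0` added). -/
def augIn (n : ℕ) (μ : ℕ → ℕ) (u : ℕ × ℕ) : Prop :=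
  1 ≤ u.1 ∧ u.1 ≤ n ∧ u.2 ≤ μ u.1

/-- The column diagram of `μ` as a finite set. -/
def dgF (n : ℕ) (μ : ℕ → ℕ) : Finset (ℕ × ℕ) :=
  (Finset.Icc 1 n).biUnion (fun i => (Finset.Icc 1 (μ i)).image (fun j => (i, j)))

/-- The augmented diagram of `μ` as a finite set. -/
def augF (n : ℕ) (μ : ℕ → ℕ) : Finset (ℕ × ℕ) :=
  (Finset.Icc 1 n).biUnion (fun i => (Finset.Icc 0 (μ i)).image (fun j => (i, j)))

/-- The box directly below `u`. -/
def dbox (u : ℕ × ℕ) : ℕ × ℕ := (u.1, u.2 - 1)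

/-- `v` belongs to the arm of `u` (left arm or right arm). -/
def armIn (n : ℕ) (μ : ℕ → ℕ) (u v : ℕ × ℕ) : Prop :=
  (dgIn n μ v ∧ v.2 = u.2 ∧ v.1 < u.1 ∧ μ v.1 ≤ μ u.1) ∨
  (augIn n μ v ∧ v.2 + 1 = u.2 ∧ u.1 < v.1 ∧ μ v.1 < μ u.1)

/-- The arm of `u` as a finite set. -/
def armF (n : ℕ) (μ : ℕ → ℕ) (u : ℕ × ℕ) : Finset (ℕ × ℕ) :=
  (augF n μ).filter (fun v => armIn n μ u v)

/-- The leg length `l(u) = μ_i - j`. -/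
def legLen (μ : ℕ → ℕ) (u : ℕ × ℕ) : ℕ := μ u.1 - u.2

/-- The arm length `a(u) = |arm(u)|`. -/
def armLen (n : ℕ) (μ : ℕ → ℕ) (u : ℕ × ℕ) : ℕ := (armF n μ u).card

/-- Two distinct boxes attack each other: same row, or consecutive rows with
the lower box strictly to the right. -/
def attacks (u v : ℕ × ℕ) : Prop :=
  u ≠ v ∧ (u.2 = v.2 ∨ (u.2 = v.2 + 1 ∧ u.1 < v.1) ∨ (v.2 = u.2 + 1 ∧ v.1 < u.1))

/-- Reading order: rows top to bottom, right to left within a row. -/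
def rlt (u v : ℕ × ℕ) : Prop := v.2 < u.2 ∨ (u.2 = v.2 ∧ v.1 < u.1)

/-- The augmented filling: value `i` in the row-0 box `(i,0)`. -/
def augOf (σ : ℕ × ℕ → ℕ) : ℕ × ℕ → ℕ := fun u => if u.2 = 0 then u.1 else σ u

/-- The (augmented) filling is non-attacking. -/
def NonAttacking (n : ℕ) (μ : ℕ → ℕ) (σh : ℕ × ℕ → ℕ) : Prop :=
  ∀ u v : ℕ × ℕ, augIn n μ u → augIn n μ v → attacks u v → σh u ≠ σh v

/-- The set of inversions of an augmented filling: attacking pairs,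
earlier box (in reading order) having the larger entry. -/
def invF (n : ℕ) (μ : ℕ → ℕ) (σh : ℕ × ℕ → ℕ) : Finset ((ℕ × ℕ) × (ℕ × ℕ)) :=
  ((augF n μ) ×ˢ (augF n μ)).filter
    (fun p => attacks p.1 p.2 ∧ rlt p.1 p.2 ∧ σh p.2 < σh p.1)

/-- The descent set of an augmented filling. -/
def desF (n : ℕ) (μ : ℕ → ℕ) (σh : ℕ × ℕ → ℕ) : Finset (ℕ × ℕ) :=
  (dgF n μ).filter (fun u => σh (dbox u) < σh u)

/-- maj = sum of `l(u)+1` over descents. -/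
def majStat (n : ℕ) (μ : ℕ → ℕ) (σh : ℕ × ℕ → ℕ) : ℕ :=
  ∑ u ∈ desF n μ σh, (legLen μ u + 1)

/-- `χ_{xy} = 1` iff the earlier box in reading order carries the larger entry. -/
def chi (σh : ℕ × ℕ → ℕ) (x y : ℕ × ℕ) : ℕ :=
  if (rlt x y ∧ σh y < σh x) ∨ (rlt y x ∧ σh x < σh y) then 1 else 0

/-- Triples `(u, v, d(u))`, encoded by the pair `(u, v)` with `v ∈ arm(u)`. -/
def triplesF (n : ℕ) (μ : ℕ → ℕ) : Finset ((ℕ × ℕ) × (ℕ × ℕ)) :=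
  ((dgF n μ) ×ˢ (augF n μ)).filter (fun p => armIn n μ p.1 p.2)

/-- Inversion triples: `χ_{uv} + χ_{vw} - χ_{uw} = 1` where `w = d(u)`. -/
def invTriplesF (n : ℕ) (μ : ℕ → ℕ) (σh : ℕ × ℕ → ℕ) : Finset ((ℕ × ℕ) × (ℕ × ℕ)) :=
  (triplesF n μ).filter
    (fun p => chi σh p.1 p.2 + chi σh p.2 (dbox p.1) = chi σh p.1 (dbox p.1) + 1)

/-- Co-inversion triples: `χ_{uv} + χ_{vw} - χ_{uw} = 0` where `w = d(u)`. -/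
def coinvTriplesF (n : ℕ) (μ : ℕ → ℕ) (σh : ℕ × ℕ → ℕ) : Finset ((ℕ × ℕ) × (ℕ × ℕ)) :=
  (triplesF n μ).filter
    (fun p => chi σh p.1 p.2 + chi σh p.2 (dbox p.1) = chi σh p.1 (dbox p.1))

/-- coinv = number of co-inversion triples. -/
def coinvStat (n : ℕ) (μ : ℕ → ℕ) (σh : ℕ × ℕ → ℕ) : ℕ := (coinvTriplesF n μ σh).card

/-- `σ` is a filling of `μ`, i.e. takes values in `[n]` on the diagram. -/
def IsFilling (n : ℕ) (μ : ℕ → ℕ) (σ : ℕ × ℕ → ℕ) : Prop :=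
  ∀ u : ℕ × ℕ, dgIn n μ u → 1 ≤ σ u ∧ σ u ≤ n

/-- `π` on compositions: `π(μ) = (μ_n+1, μ_1, …, μ_{n-1})`. -/
def piComp (n : ℕ) (μ : ℕ → ℕ) : ℕ → ℕ := fun i => if i = 1 then μ n + 1 else μ (i - 1)

/-- `π` on boxes: `(i,j) ↦ (i+1,j)` for `i < n`, `(n,j) ↦ (1,j+1)`. -/
def piBox (n : ℕ) (u : ℕ × ℕ) : ℕ × ℕ := if u.1 < n then (u.1 + 1, u.2) else (1, u.2 + 1)

/-- `π` on values: `k ↦ k+1` for `k < n`, `n ↦ 1`. -/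
def piVal (n k : ℕ) : ℕ := if k < n then k + 1 else 1

/-! Number the boxes by `k(i, j) = n j + i`. Then `π` is `k ↦ k + 1`, and the top box of the
column of `π(v)` in `π(μ)` is the successor of the top box of the column of `v` in `μ`. The arm
of `u` consists of the boxes `v` of the augmented diagram with `k(u) - n < k(v) < k(u)` whose
column top comes before that of `u`, so every ingredient is shifted by one under `π`; the one box
`(1, 0)` that is not of the form `π(v)` lies in no arm. -/

/-- The inverse of `piBox n`. The box `(1, 0)` is not in its range and is sent to `(n, 0)`. -/
def piBoxInv (n : ℕ) (w : ℕ × ℕ) : ℕ × ℕ := if w.1 = 1 then (n, w.2 - 1) else (w.1 - 1, w.2)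

section

variable {n : ℕ} {μ : ℕ → ℕ} {i j : ℕ} {u v w : ℕ × ℕ}

lemma piBox_of_lt (h : i < n) : piBox n (i, j) = (i + 1, j) := if_pos h

lemma piBox_self : piBox n (n, j) = (1, j + 1) := if_neg (lt_irrefl n)

lemma piBoxInv_one : piBoxInv n (1, j) = (n, j - 1) := if_pos rfl

lemma piBoxInv_of_ne_one (h : i ≠ 1) : piBoxInv n (i, j) = (i - 1, j) := if_neg h

lemma piComp_one : piComp n μ 1 = μ n + 1 := if_pos rfl

lemma piComp_succ (h : 1 ≤ i) : piComp n μ (i + 1) = μ i := by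
  rw [piComp, if_neg (by omega), Nat.add_sub_cancel]

lemma piBoxInv_piBox (hv : 1 ≤ v.1 ∧ v.1 ≤ n) : piBoxInv n (piBox n v) = v := by
  obtain ⟨a, b⟩ := v
  obtain ⟨ha, h | rfl⟩ : 1 ≤ a ∧ (a < n ∨ a = n) := ⟨hv.1, hv.2.lt_or_eq⟩
  · rw [piBox_of_lt h, piBoxInv_of_ne_one (by omega), Nat.add_sub_cancel]
  · rw [piBox_self, piBoxInv_one, Nat.add_sub_cancel]

lemma piBox_piBoxInv (hw : 1 ≤ w.1 ∧ w.1 ≤ n) (hw₀ : w ≠ (1, 0)) :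
    piBox n (piBoxInv n w) = w := by
  obtain ⟨a, b⟩ := w
  simp only [ne_eq, Prod.mk.injEq] at hw hw₀
  by_cases ha : a = 1
  · subst ha
    rw [piBoxInv_one, piBox_self, Nat.sub_add_cancel (by omega)]
  · rw [piBoxInv_of_ne_one ha, piBox_of_lt (by omega), Nat.sub_add_cancel hw.1]

lemma piBoxInv_fst_mem (hw : 1 ≤ w.1 ∧ w.1 ≤ n) :
    1 ≤ (piBoxInv n w).1 ∧ (piBoxInv n w).1 ≤ n := by
  unfold piBoxInv
  split_ifs <;> omega

lemma one_le_piBox_fst : 1 ≤ (piBox n u).1 := by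
  unfold piBox
  split_ifs <;> simp

lemma legLen_piComp_piBox (hv : 1 ≤ v.1 ∧ v.1 ≤ n) :
    legLen (piComp n μ) (piBox n v) = legLen μ v := by
  obtain ⟨a, b⟩ := v
  obtain ⟨ha, h | rfl⟩ : 1 ≤ a ∧ (a < n ∨ a = n) := ⟨hv.1, hv.2.lt_or_eq⟩
  · rw [piBox_of_lt h, legLen, piComp_succ ha, legLen]
  · rw [piBox_self, legLen, piComp_one, legLen, Nat.add_sub_add_right]

lemma mem_augF : v ∈ augF n μ ↔ augIn n μ v := by
  simp only [augF, augIn, mem_biUnion, mem_image, mem_Icc, zero_le, true_and]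
  constructor
  · rintro ⟨i, hi, j, hj, rfl⟩
    exact ⟨hi.1, hi.2, hj⟩
  · rintro ⟨h₁, hn, hμ⟩
    exact ⟨v.1, ⟨h₁, hn⟩, v.2, hμ, rfl⟩

lemma armIn.augIn (h : armIn n μ u v) : augIn n μ v := by
  rcases h with ⟨⟨h₁, hn, -, hμ⟩, -⟩ | ⟨h, -⟩
  exacts [⟨h₁, hn, hμ⟩, h]

lemma armIn.fst_mem (h : armIn n μ u v) : 1 ≤ v.1 ∧ v.1 ≤ n :=
  ⟨h.augIn.1, h.augIn.2.1⟩

lemma mem_armF : v ∈ armF n μ u ↔ armIn n μ u v := by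
  simp only [armF, mem_filter, mem_augF, and_iff_right_iff_imp]
  exact armIn.augIn

lemma not_armIn_one_zero (hu : 1 ≤ u.1) : ¬ armIn n μ u (1, 0) := by
  rintro (⟨⟨-, -, h, -⟩, -⟩ | ⟨-, -, h, -⟩) <;> dsimp only at h <;> omega

lemma armIn_piComp_piBox_iff (hu : dgIn n μ u) (hv : 1 ≤ v.1 ∧ v.1 ≤ n) :
    armIn n (piComp n μ) (piBox n u) (piBox n v) ↔ armIn n μ u v := by
  obtain ⟨i, j⟩ := u
  obtain ⟨a, b⟩ := v
  obtain ⟨hi, hin, hj, -⟩ := hu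
  obtain ⟨ha, han⟩ := hv
  dsimp only at hi hin hj ha han
  rcases hin.lt_or_eq with hin | rfl <;> rcases han.lt_or_eq with han | rfl <;>
  simp only [piBox_of_lt, piBox_self, armIn, dgIn, augIn, piComp_one, piComp_succ, hi, ha, hin,
    han, true_and] <;>
  omega

lemma armLen_piComp_piBox (hu : dgIn n μ u) :
    armLen n (piComp n μ) (piBox n u) = armLen n μ u := by
  have piBox_piBoxInv_of_armIn {w} (hw : armIn n (piComp n μ) (piBox n u) w) :
      piBox n (piBoxInv n w) = w :=
    piBox_piBoxInv hw.fst_mem (by rintro rfl; exact not_armIn_one_zero one_le_piBox_fst hw)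
  refine (card_nbij' (piBox n) (piBoxInv n) (fun v hv => ?_) (fun w hw => ?_) (fun v hv => ?_)
    (fun w hw => ?_)).symm <;> rw [mem_coe, mem_armF] at *
  · exact (armIn_piComp_piBox_iff hu hv.fst_mem).2 hv
  · rw [← armIn_piComp_piBox_iff hu (piBoxInv_fst_mem hw.fst_mem), piBox_piBoxInv_of_armIn hw]
    exact hw
  · exact piBoxInv_piBox hv.fst_mem
  · exact piBox_piBoxInv_of_armIn hw

end

theorem piBox_leg_arm_general (n : ℕ) (μ : ℕ → ℕ) (u : ℕ × ℕ)
    (hu : dgIn n μ u) :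
    legLen (piComp n μ) (piBox n u) = legLen μ u ∧
    armLen n (piComp n μ) (piBox n u) = armLen n μ u :=
  ⟨legLen_piComp_piBox ⟨hu.1, hu.2.1⟩, armLen_piComp_piBox hu⟩

/-- the cyclic shift preserves leg and arm lengths:
`l(π(u)) = l(u)` and `a(π(u)) = a(u)`. -/
theorem piBox_leg_arm (n : ℕ) (μ : ℕ → ℕ) (hn : 1 ≤ n) (u : ℕ × ℕ)
    (hu : dgIn n μ u) :
    legLen (piComp n μ) (piBox n u) = legLen μ u ∧
    armLen n (piComp n μ) (piBox n u) = armLen n μ u :=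
  piBox_leg_arm_general n μ u hu
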